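/- arXiv:2010.04424 — 3 statements merged into one kernel-verified Lean document; each statement's English description precedes it below -/
import Mathlib

section
/- For all real numbers $a, b$ with $\frac{1}{2} \le a \le 1$ and $\frac{1}{2} \le b \le 1$, and any angle $\alpha \in [0, \frac{7}{8}\pi]$, we have $a + b - \sqrt{a^2 + b^2 - 2ab\cos(\alpha)} \ge 0.019$. -/
open Real

theorem shorten_progress (a b α : ℝ)
    (ha1 : 1/2 ≤ a) (ha2 : a ≤ 1) (hb1 : 1/2 ≤ b) (hb2 : b ≤ 1)
    (hα0 : 0 ≤ α) (hα1 : α ≤ 7/8 * π) :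
    a + b - Real.sqrt (a^2 + b^2 - 2*a*b*Real.cos α) ≥ 0.019 := by
  have hpi : α ≤ π := le_trans hα1 (by nlinarith [Real.pi_pos])
  have hmono : Real.cos (7/8 * π) ≤ Real.cos α :=
    Real.cos_le_cos_of_nonneg_of_le_pi hα0 (by nlinarith [Real.pi_pos]) hα1
  have h78 : Real.cos (7/8 * π) = -Real.cos (π/8) := by
    rw [show (7/8 : ℝ) * π = π - π/8 by ring, Real.cos_pi_sub]
  have h2 : Real.sqrt 2 ≤ 1.42028 := by
    rw [show (1.42028 : ℝ) = Real.sqrt (1.42028^2) by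
      rw [Real.sqrt_sq]; norm_num]
    exact Real.sqrt_le_sqrt (by norm_num)
  have hc8 : Real.cos (π/8) ≤ 0.9247 := by
    rw [Real.cos_pi_div_eight]
    have : Real.sqrt (2 + Real.sqrt 2) ≤ 1.8494 := by
      rw [show (1.8494 : ℝ) = Real.sqrt (1.8494^2) by
        rw [Real.sqrt_sq]; norm_num]
      exact Real.sqrt_le_sqrt (by nlinarith)
    linarith
  have hcos : -0.9247 ≤ Real.cos α := by
    rw [h78] at hmono; linarith
  have key : Real.sqrt (a^2 + b^2 - 2*a*b*Real.cos α) ≤ a + b - 0.019 := by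
    have : a^2 + b^2 - 2*a*b*Real.cos α ≤ (a + b - 0.019)^2 := by
      nlinarith [mul_le_mul hb1 ha1 (by norm_num : (0:ℝ) ≤ 1/2) (by linarith),
        mul_nonneg (by linarith : (0:ℝ) ≤ a) (by linarith : (0:ℝ) ≤ b)]
    calc Real.sqrt (a^2 + b^2 - 2*a*b*Real.cos α) ≤ Real.sqrt ((a + b - 0.019)^2) :=
          Real.sqrt_le_sqrt this
      _ = a + b - 0.019 := Real.sqrt_sq (by linarith)
  linarith
end

section
/- For all real numbers $a, b$ with $\frac{1}{2} \le a \le 1$ and $\frac{1}{2} \le b \le 1$: $a + b - \sqrt{a^2 + b^2 + 2ab\cos(\pi/8)} \ge 1 - \sqrt{\frac{1}{2}\left(1 + \frac{\sqrt{2+\sqrt{2}}}{2}\right)}$. -/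
open Real

lemma mono_aux (a a' b c : ℝ) (ha' : 0 ≤ a') (haa : a' ≤ a) (hb : 0 ≤ b)
    (hc : 0 ≤ c) (hc1 : c ≤ 1) :
    a' + b - Real.sqrt (a'^2 + b^2 + 2*a'*b*c) ≤
      a + b - Real.sqrt (a^2 + b^2 + 2*a*b*c) := by
  have ha : 0 ≤ a := le_trans ha' haa
  have hq : 0 ≤ a^2 + b^2 + 2*a*b*c := by positivity
  have hq' : 0 ≤ a'^2 + b^2 + 2*a'*b*c := by positivity
  set s := Real.sqrt (a^2 + b^2 + 2*a*b*c) with hs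
  set s' := Real.sqrt (a'^2 + b^2 + 2*a'*b*c) with hs'
  have hs0 : 0 ≤ s := Real.sqrt_nonneg _
  have hs0' : 0 ≤ s' := Real.sqrt_nonneg _
  have hsq : s^2 = a^2 + b^2 + 2*a*b*c := Real.sq_sqrt hq
  have hsq' : s'^2 = a'^2 + b^2 + 2*a'*b*c := Real.sq_sqrt hq'
  have hbc : b*c ≤ b := mul_le_of_le_one_right hb hc1
  have hbb : (0:ℝ) ≤ (b - b*c)*(b + b*c) :=
    mul_nonneg (by linarith) (add_nonneg hb (mul_nonneg hb hc))
  have h1 : a + b*c ≤ s := by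
    rw [hs]
    calc a + b*c = Real.sqrt ((a+b*c)^2) := (Real.sqrt_sq (by positivity)).symm
      _ ≤ _ := Real.sqrt_le_sqrt (by nlinarith)
  have h1' : a' + b*c ≤ s' := by
    rw [hs']
    calc a' + b*c = Real.sqrt ((a'+b*c)^2) := (Real.sqrt_sq (by positivity)).symm
      _ ≤ _ := Real.sqrt_le_sqrt (by nlinarith)
  nlinarith [mul_nonneg (sub_nonneg.2 haa) (add_nonneg hs0 hs0'),
    sq_nonneg (s - s'), mul_nonneg hb hc]

theorem shorten_min_at_corner (a b : ℝ)
    (ha1 : 1/2 ≤ a) (ha2 : a ≤ 1) (hb1 : 1/2 ≤ b) (hb2 : b ≤ 1) :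
    a + b - Real.sqrt (a^2 + b^2 + 2*a*b*Real.cos (π/8)) ≥
      1 - Real.sqrt (1/2 * (1 + Real.sqrt (2 + Real.sqrt 2) / 2)) := by
  set c := Real.cos (π/8) with hcdef
  have hc : 0 ≤ c := Real.cos_nonneg_of_mem_Icc ⟨by linarith [Real.pi_pos], by linarith [Real.pi_pos]⟩
  have hc1 : c ≤ 1 := Real.cos_le_one _
  have step1 : (1/2 : ℝ) + b - Real.sqrt ((1/2)^2 + b^2 + 2*(1/2)*b*c) ≤
      a + b - Real.sqrt (a^2 + b^2 + 2*a*b*c) :=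
    mono_aux a (1/2) b c (by norm_num) ha1 (by linarith) hc hc1
  have step2 : (1/2 : ℝ) + (1/2) - Real.sqrt ((1/2)^2 + (1/2)^2 + 2*(1/2)*(1/2)*c) ≤
      (1/2 : ℝ) + b - Real.sqrt ((1/2)^2 + b^2 + 2*(1/2)*b*c) := by
    have := mono_aux b (1/2) (1/2) c (by norm_num) hb1 (by norm_num) hc hc1
    have e1 : (1/2:ℝ)^2 + b^2 + 2*(1/2)*b*c = b^2 + (1/2)^2 + 2*b*(1/2)*c := by ring
    have e2 : ((1/2:ℝ))^2 + (1/2)^2 + 2*(1/2)*(1/2)*c = (1/2)^2 + (1/2)^2 + 2*(1/2)*(1/2)*c := by ring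
    rw [e1]; linarith
  have hfinal : Real.sqrt ((1/2:ℝ)^2 + (1/2)^2 + 2*(1/2)*(1/2)*c) =
      Real.sqrt (1/2 * (1 + Real.sqrt (2 + Real.sqrt 2) / 2)) := by
    rw [hcdef, Real.cos_pi_div_eight]; ring_nf
  have := hfinal ▸ step2
  linarith [step1, this]
end

section
/- Let $p_{i-1}, p_i, p_{i+1}$ be points in the plane with $\|p_i - p_{i-1}\| \le 1$, $\|p_{i+1} - p_i\| \le 1$, and the angle at $p_i$ between the rays to $p_{i-1}$ and $p_{i+1}$ strictly greater than $\pi/3$. Then the distance from $p_i$ to the midpoint $m$ of $p_{i-1}$ and $p_{i+1}$ satisfies $\|p_i - m\| \le \frac{\sqrt{3}}{2}$. -/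
/-!
The angle exceeds `π/3`, so its cosine is below `1/2` and the inner product of the two edge
vectors `u = p - q`, `v = r - q` is at most `‖u‖ ‖v‖ / 2 ≤ 1/2`. Hence
`‖u + v‖² = ‖u‖² + 2⟪u, v⟫ + ‖v‖² ≤ 3`, and `q` is at distance `‖u + v‖ / 2 ≤ √3 / 2` from the
midpoint of `p` and `r`.
-/

open Real EuclideanGeometry

namespace InnerProductGeometry

variable {V : Type*} [NormedAddCommGroup V] [InnerProductSpace ℝ V]

theorem inner_le_norm_mul_norm_div_two_of_pi_div_three_le_angle {u v : V}
    (h : π / 3 ≤ angle u v) : inner ℝ u v ≤ ‖u‖ * ‖v‖ / 2 := by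
  have hcos : cos (angle u v) ≤ 1 / 2 := by
    rw [← cos_pi_div_three]
    exact cos_le_cos_of_nonneg_of_le_pi (by positivity) (angle_le_pi u v) h
  rw [← cos_angle_mul_norm_mul_norm]
  nlinarith [mul_nonneg (norm_nonneg u) (norm_nonneg v)]

theorem norm_add_le_sqrt_three_of_pi_div_three_le_angle {u v : V} (hu : ‖u‖ ≤ 1) (hv : ‖v‖ ≤ 1)
    (h : π / 3 ≤ angle u v) : ‖u + v‖ ≤ √3 := by
  have hinner := inner_le_norm_mul_norm_div_two_of_pi_div_three_le_angle h
  rw [le_sqrt (norm_nonneg _) (by norm_num), norm_add_sq_real]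
  nlinarith [norm_nonneg u, norm_nonneg v]

end InnerProductGeometry

namespace EuclideanGeometry

variable {V P : Type*} [NormedAddCommGroup V] [InnerProductSpace ℝ V] [MetricSpace P]
  [NormedAddTorsor V P]

theorem dist_midpoint_le_sqrt_three_div_two_of_pi_div_three_le_angle {p q r : P}
    (hpq : dist q p ≤ 1) (hqr : dist r q ≤ 1) (h : π / 3 ≤ ∠ p q r) :
    dist q (midpoint ℝ p r) ≤ √3 / 2 := by
  have hmid : dist q (midpoint ℝ p r) = ‖(p -ᵥ q) + (r -ᵥ q)‖ / 2 := by
    rw [dist_comm, dist_eq_norm_vsub V, midpoint_vsub, ← smul_add, norm_smul, invOf_eq_inv]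
    simp [div_eq_inv_mul]
  rw [hmid, div_le_div_iff_of_pos_right two_pos]
  refine InnerProductGeometry.norm_add_le_sqrt_three_of_pi_div_three_le_angle ?_ ?_ h
  · rwa [← dist_eq_norm_vsub, dist_comm]
  · rwa [← dist_eq_norm_vsub]

end EuclideanGeometry

theorem shorten_displacement (p q r : EuclideanSpace ℝ (Fin 2))
    (hpq : dist q p ≤ 1) (hqr : dist r q ≤ 1)
    (hangle : EuclideanGeometry.angle p q r > π/3) :
    dist q (midpoint ℝ p r) ≤ Real.sqrt 3 / 2 :=
  dist_midpoint_le_sqrt_three_div_two_of_pi_div_three_le_angle hpq hqr hangle.le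
end
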